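/- arXiv:0902.2563 — 5 statements merged into one kernel-verified Lean document; each statement's English description precedes it below -/
import Mathlib

section
/- Let E be a real separable Banach space, μ a centered Gaussian measure on E, and (f_j)_{j≥1} a sequence in E that is admissible for μ. Then ‖f_j‖ → 0 as j → ∞. -/
/-!
If `‖f j‖ ≥ ε` for infinitely many `j`, then along those `j` the independent events
`{ξ j ≥ 1}` have a common positive probability, so by the second Borel–Cantelli lemma
`‖ξ j • f j‖ ≥ ε` infinitely often, almost surely. This is incompatible with the almost sure
convergence of the partial sums, whose terms must tend to zero.
-/

open MeasureTheory ProbabilityTheory Filter Topology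

/-- A centered Gaussian measure on a real Banach space. -/
def IsCenteredGaussianMeasure {E : Type*} [NormedAddCommGroup E] [NormedSpace ℝ E]
    [MeasurableSpace E] (μ : Measure E) : Prop :=
  IsProbabilityMeasure μ ∧ ∀ u : E →L[ℝ] ℝ, ∃ v : NNReal, μ.map u = gaussianReal 0 v

/-- A sequence `f` in `E` is admissible for `μ` (with respect to the i.i.d. standard normal
sequence `ξ` on `(Ω, P)`) if the partial sums `∑_{j<n} ξ_j f_j` converge almost surely in `E`
and the law of the limit is `μ`. -/
def Admissible {E : Type*} [NormedAddCommGroup E] [NormedSpace ℝ E] [MeasurableSpace E]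
    {Ω : Type*} [MeasurableSpace Ω] (P : Measure Ω) (ξ : ℕ → Ω → ℝ)
    (μ : Measure E) (f : ℕ → E) : Prop :=
  ∃ X : Ω → E, AEMeasurable X P ∧
    (∀ᵐ ω ∂P, Tendsto (fun n => ∑ j ∈ Finset.range n, ξ j ω • f j) atTop (𝓝 (X ω))) ∧
    P.map X = μ

theorem tendsto_zero_of_tendsto_sum_range {G : Type*} [AddCommGroup G] [TopologicalSpace G]
    [IsTopologicalAddGroup G] {a : ℕ → G} {s : G}
    (h : Tendsto (fun n => ∑ j ∈ Finset.range n, a j) atTop (𝓝 s)) :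
    Tendsto a atTop (𝓝 0) := by
  have := (h.comp (tendsto_add_atTop_nat 1)).sub h
  simpa [Function.comp_def, Finset.sum_range_succ_sub_sum] using this

theorem gaussianReal_pos_of_volume_ne_zero (m : ℝ) {v : NNReal} (hv : v ≠ 0) {s : Set ℝ}
    (hs : volume s ≠ 0) : 0 < gaussianReal m v s :=
  pos_iff_ne_zero.2 fun h => hs (gaussianReal_absolutelyContinuous' m hv h)

namespace ProbabilityTheory

theorem iIndepFun.ae_frequently_mem {Ω β : Type*} [MeasurableSpace Ω] [MeasurableSpace β]
    {P : Measure Ω} {ξ : ℕ → Ω → β} (hmeas : ∀ j, Measurable (ξ j))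
    (hindep : iIndepFun ξ P) {B : ℕ → Set β} (hB : ∀ j, MeasurableSet (B j))
    {p : ENNReal} (hp : 0 < p)
    (hfreq : ∃ᶠ j in atTop, p ≤ P (ξ j ⁻¹' B j)) :
    ∀ᵐ ω ∂P, ∃ᶠ j in atTop, ξ j ω ∈ B j := by
  have := hindep.isProbabilityMeasure
  have hsm : ∀ j, MeasurableSet (ξ j ⁻¹' B j) := fun j => hmeas j (hB j)
  have hindep_sets : iIndepSet (fun j => ξ j ⁻¹' B j) P :=
    (iIndepSet_iff_meas_biInter hsm).2 fun S =>
      hindep.measure_inter_preimage_eq_mul S fun j _ => hB j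
  have hsum : ∑' j, P (ξ j ⁻¹' B j) = ⊤ := by
    by_contra hne
    obtain ⟨j, hpj, hjp⟩ := (hfreq.and_eventually
      ((ENNReal.tendsto_atTop_zero_of_tsum_ne_top hne).eventually_lt_const hp)).exists
    exact hpj.not_gt hjp
  have hae : limsup (fun j => ξ j ⁻¹' B j) atTop ∈ ae P :=
    (mem_ae_iff_prob_eq_one (MeasurableSet.measurableSet_limsup hsm)).2
      (measure_limsup_eq_one hsm hindep_sets hsum)
  exact Filter.mem_of_superset hae fun ω hω => mem_limsup_iff_frequently_mem.1 hω

theorem ae_frequently_le_norm_smul {E Ω : Type*} [NormedAddCommGroup E]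
    [NormedSpace ℝ E] [MeasurableSpace Ω] {P : Measure Ω} {ξ : ℕ → Ω → ℝ}
    (hmeas : ∀ j, Measurable (ξ j)) (hindep : iIndepFun ξ P)
    (hdist : ∀ j, P.map (ξ j) = gaussianReal 0 1) {f : ℕ → E} {ε : ℝ}
    (hf : ∃ᶠ j in atTop, ε ≤ ‖f j‖) :
    ∀ᵐ ω ∂P, ∃ᶠ j in atTop, ε ≤ ‖ξ j ω • f j‖ := by
  have hB : ∀ j, MeasurableSet {x : ℝ | ε ≤ ‖x • f j‖} := fun j =>
    (isClosed_le continuous_const (by fun_prop)).measurableSet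
  have hp : 0 < gaussianReal 0 1 (Set.Ici 1) :=
    gaussianReal_pos_of_volume_ne_zero 0 one_ne_zero (by simp [Real.volume_Ici])
  refine hindep.ae_frequently_mem hmeas hB hp (hf.mono fun j hj => ?_)
  rw [← Measure.map_apply (hmeas j) (hB j), hdist j]
  refine measure_mono fun x (hx : 1 ≤ x) => ?_
  calc ε ≤ ‖f j‖ := hj
    _ ≤ ‖x • f j‖ := by
      rw [norm_smul, Real.norm_of_nonneg (by linarith)]
      exact le_mul_of_one_le_left (norm_nonneg _) hx

end ProbabilityTheory

theorem stmt2_general {E : Type*} [NormedAddCommGroup E] [NormedSpace ℝ E] [MeasurableSpace E]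
    (μ : Measure E)
    {Ω : Type*} [MeasurableSpace Ω] (P : Measure Ω)
    (ξ : ℕ → Ω → ℝ) (hmeas : ∀ j, Measurable (ξ j))
    (hindep : iIndepFun ξ P)
    (hdist : ∀ j, P.map (ξ j) = gaussianReal 0 1)
    (f : ℕ → E) (hf : Admissible P ξ μ f) :
    Tendsto (fun j => ‖f j‖) atTop (𝓝 0) := by
  obtain ⟨X, -, hconv, -⟩ := hf
  have := hindep.isProbabilityMeasure
  refine tendsto_zero_iff_norm_tendsto_zero.1 <|
    NormedAddGroup.tendsto_nhds_zero.2 fun ε hε => ?_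
  by_contra hsmall
  have hlarge : ∃ᶠ j in atTop, ε ≤ ‖f j‖ := by
    simpa only [not_eventually, not_lt] using hsmall
  obtain ⟨ω, hfreq, hω⟩ :=
    ((ae_frequently_le_norm_smul hmeas hindep hdist hlarge).and hconv).exists
  have hterms := tendsto_zero_iff_norm_tendsto_zero.1 (tendsto_zero_of_tendsto_sum_range hω)
  obtain ⟨j, hεj, hjε⟩ := (hfreq.and_eventually (hterms.eventually_lt_const hε)).exists
  exact hεj.not_gt hjε

theorem stmt2 {E : Type*} [NormedAddCommGroup E] [NormedSpace ℝ E] [CompleteSpace E]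
    [TopologicalSpace.SeparableSpace E] [MeasurableSpace E] [BorelSpace E]
    (μ : Measure E) (hμ : IsCenteredGaussianMeasure μ)
    {Ω : Type*} [MeasurableSpace Ω] (P : Measure Ω) [IsProbabilityMeasure P]
    (ξ : ℕ → Ω → ℝ) (hmeas : ∀ j, Measurable (ξ j))
    (hindep : iIndepFun ξ P)
    (hdist : ∀ j, P.map (ξ j) = gaussianReal 0 1)
    (f : ℕ → E) (hf : Admissible P ξ μ f) :
    Tendsto (fun j => ‖f j‖) atTop (𝓝 0) :=
  stmt2_general μ P ξ hmeas hindep hdist f hf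
end

section
/- Let (f_j)_{j≥1} be a sequence in a real separable Hilbert space K such that for every k ∈ K, ‖∑_{j=1}^n ⟨k, f_j⟩ f_j‖ → ‖k‖ as n → ∞. Then for every k ∈ K, ∑_{j=1}^∞ ⟨k, f_j⟩² ≤ ‖k‖². -/
/-!
Writing `S_m k = ∑_{j<m} ⟪k, f j⟫ • f j`, the partial sum `∑_{j<m} ⟪k, f j⟫ ^ 2` equals `⟪k, S_m k⟫`,
so by Cauchy–Schwarz it is at most `‖k‖ * ‖S_m k‖`, which tends to `‖k‖ ^ 2`. As the partial sums
increase with `m`, each of them is bounded by `‖k‖ ^ 2`, and a nonnegative series with bounded partial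
sums is summable with sum at most that bound.
-/

open Filter Topology RealInnerProductSpace

section

variable {K ι : Type*} [NormedAddCommGroup K] [InnerProductSpace ℝ K]

theorem real_inner_sum_inner_smul_self (s : Finset ι) (f : ι → K) (k : K) :
    ⟪k, ∑ j ∈ s, ⟪k, f j⟫ • f j⟫ = ∑ j ∈ s, ⟪k, f j⟫ ^ 2 := by
  simp only [inner_sum, real_inner_smul_right, sq]

theorem sum_inner_sq_le_norm_mul_norm_sum (s : Finset ι) (f : ι → K) (k : K) :
    ∑ j ∈ s, ⟪k, f j⟫ ^ 2 ≤ ‖k‖ * ‖∑ j ∈ s, ⟪k, f j⟫ • f j‖ :=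
  real_inner_sum_inner_smul_self s f k ▸ real_inner_le_norm _ _

theorem sum_range_inner_sq_le_sq_norm_of_tendsto {f : ℕ → K} {k : K}
    (hk : Tendsto (fun n => ‖∑ j ∈ Finset.range n, ⟪k, f j⟫ • f j‖) atTop (𝓝 ‖k‖)) (n : ℕ) :
    ∑ j ∈ Finset.range n, ⟪k, f j⟫ ^ 2 ≤ ‖k‖ ^ 2 := by
  have hbound : ∀ᶠ m in atTop,
      ∑ j ∈ Finset.range n, ⟪k, f j⟫ ^ 2 ≤ ‖k‖ * ‖∑ j ∈ Finset.range m, ⟪k, f j⟫ • f j‖ := by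
    filter_upwards [eventually_ge_atTop n] with m hm
    calc ∑ j ∈ Finset.range n, ⟪k, f j⟫ ^ 2
        ≤ ∑ j ∈ Finset.range m, ⟪k, f j⟫ ^ 2 :=
          Finset.sum_le_sum_of_subset_of_nonneg (Finset.range_subset_range.2 hm)
            fun j _ _ => sq_nonneg _
      _ ≤ ‖k‖ * ‖∑ j ∈ Finset.range m, ⟪k, f j⟫ • f j‖ :=
          sum_inner_sq_le_norm_mul_norm_sum _ f k
  rw [sq]
  exact ge_of_tendsto (hk.const_mul ‖k‖) hbound

end

theorem stmt4_general {K : Type*} [NormedAddCommGroup K] [InnerProductSpace ℝ K] (f : ℕ → K)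
    (h : ∀ k : K, Tendsto (fun n => ‖∑ j ∈ Finset.range n, ⟪k, f j⟫ • f j‖) atTop (𝓝 ‖k‖)) :
    ∀ k : K, Summable (fun j => ⟪k, f j⟫ ^ 2) ∧ ∑' j, ⟪k, f j⟫ ^ 2 ≤ ‖k‖ ^ 2 := by
  intro k
  have hpartial := sum_range_inner_sq_le_sq_norm_of_tendsto (h k)
  have hsum : Summable (fun j => ⟪k, f j⟫ ^ 2) :=
    summable_of_sum_range_le (fun _ => sq_nonneg _) hpartial
  exact ⟨hsum, hsum.tsum_le_of_sum_range_le hpartial⟩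

theorem stmt4 {K : Type*} [NormedAddCommGroup K] [InnerProductSpace ℝ K] [CompleteSpace K]
    [TopologicalSpace.SeparableSpace K] (f : ℕ → K)
    (h : ∀ k : K, Tendsto (fun n => ‖∑ j ∈ Finset.range n, ⟪k, f j⟫ • f j‖) atTop (𝓝 ‖k‖)) :
    ∀ k : K, Summable (fun j => ⟪k, f j⟫ ^ 2) ∧ ∑' j, ⟪k, f j⟫ ^ 2 ≤ ‖k‖ ^ 2 :=
  stmt4_general f h
end

section
/- Let I be a compact metric space, K a real separable Hilbert space, and g : I → K a map such that (s, t) ↦ ⟨g_s, g_t⟩ is continuous on I × I. Then sup_{t ∈ I} ‖g_t‖ < ∞; for every k ∈ K the function t ↦ ⟨g_t, k⟩ is continuous on I; the map S : K → C(I), S(k)(t) := ⟨g_t, k⟩, is a continuous linear operator with ‖S(k)‖_∞ ≤ (sup_{t ∈ I} ‖g_t‖) · ‖k‖ for all k ∈ K; and the orthogonal complement of the kernel of S equals the closed linear span of {g_t : t ∈ I} in K. -/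
open Filter Topology RealInnerProductSpace

section

variable {𝕜 E : Type*} [RCLike 𝕜] [NormedAddCommGroup E] [InnerProductSpace 𝕜 E]

/-- `‖g s - g t₀‖ ^ 2 = re ⟪g s, g s⟫ - 2 re ⟪g s, g t₀⟫ + re ⟪g t₀, g t₀⟫` is continuous in `s`
and vanishes at `t₀`. -/
theorem continuous_of_continuous_inner {T : Type*} [TopologicalSpace T] {g : T → E}
    (hg : Continuous fun p : T × T => inner 𝕜 (g p.1) (g p.2)) : Continuous g := by
  refine continuous_iff_continuousAt.2 fun t₀ => ?_
  have hsq : Continuous fun s => ‖g s - g t₀‖ ^ 2 := by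
    have hdiag : Continuous fun s => inner 𝕜 (g s) (g s) :=
      hg.comp (continuous_id.prodMk continuous_id)
    have hleft : Continuous fun s => inner 𝕜 (g s) (g t₀) :=
      hg.comp (continuous_id.prodMk continuous_const)
    simp_rw [@norm_sub_sq 𝕜, ← inner_self_eq_norm_sq (𝕜 := 𝕜)]
    fun_prop
  have hnorm : Tendsto (fun s => ‖g s - g t₀‖) (𝓝 t₀) (𝓝 0) := by
    simpa [Real.sqrt_sq (norm_nonneg _)] using (hsq.tendsto t₀).sqrt
  exact tendsto_iff_norm_sub_tendsto_zero.2 hnorm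

theorem Submodule.mem_orthogonal_span_range_iff {ι : Type*} (g : ι → E) (k : E) :
    k ∈ (span 𝕜 (Set.range g))ᗮ ↔ ∀ t, inner 𝕜 (g t) k = 0 := by
  rw [← span_singleton_le_iff_mem, ← isOrtho_iff_le, isOrtho_comm, isOrtho_span]
  simp

end

namespace ContinuousMap

variable (𝕜 : Type*) {I K : Type*} [RCLike 𝕜] [TopologicalSpace I] [CompactSpace I]
  [NormedAddCommGroup K] [InnerProductSpace 𝕜 K] (g : C(I, K))

noncomputable def innerRightCLM : K →L[𝕜] C(I, 𝕜) :=
  LinearMap.mkContinuous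
    { toFun := fun k => ⟨fun t => inner 𝕜 (g t) k, by fun_prop⟩
      map_add' := fun x y => by ext t; simp [inner_add_right]
      map_smul' := fun c x => by ext t; simp [inner_smul_right] }
    ‖g‖ fun k => by
      refine (ContinuousMap.norm_le _ (by positivity)).2 fun t => ?_
      calc ‖inner 𝕜 (g t) k‖ ≤ ‖g t‖ * ‖k‖ := norm_inner_le_norm _ _
        _ ≤ ‖g‖ * ‖k‖ := by gcongr; exact g.norm_coe_le_norm t

variable {𝕜}

@[simp]
theorem innerRightCLM_apply (k : K) (t : I) : g.innerRightCLM 𝕜 k t = inner 𝕜 (g t) k := rfl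

theorem norm_innerRightCLM_apply_le (k : K) : ‖g.innerRightCLM 𝕜 k‖ ≤ ‖g‖ * ‖k‖ :=
  (g.innerRightCLM 𝕜).le_of_opNorm_le (LinearMap.mkContinuous_norm_le _ (norm_nonneg g) _) k

theorem ker_innerRightCLM :
    LinearMap.ker (g.innerRightCLM 𝕜 : K →ₗ[𝕜] C(I, 𝕜)) = (Submodule.span 𝕜 (Set.range g))ᗮ := by
  ext k
  simp [Submodule.mem_orthogonal_span_range_iff, ContinuousMap.ext_iff]

theorem orthogonal_ker_innerRightCLM [CompleteSpace K] :
    (LinearMap.ker (g.innerRightCLM 𝕜 : K →ₗ[𝕜] C(I, 𝕜)))ᗮ =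
      (Submodule.span 𝕜 (Set.range g)).topologicalClosure := by
  rw [ker_innerRightCLM, Submodule.orthogonal_orthogonal_eq_closure]

end ContinuousMap

theorem stmt11_general {I : Type*} [MetricSpace I] [CompactSpace I]
    {K : Type*} [NormedAddCommGroup K] [InnerProductSpace ℝ K] [CompleteSpace K]
    (g : I → K) (hg : Continuous fun p : I × I => ⟪g p.1, g p.2⟫) :
    (∃ M : ℝ, ∀ t, ‖g t‖ ≤ M) ∧
    (∀ k : K, Continuous fun t => ⟪g t, k⟫) ∧
    (∃ S : K →L[ℝ] C(I, ℝ),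
      (∀ (k : K) (t : I), S k t = ⟪g t, k⟫) ∧
      (∀ k : K, ‖S k‖ ≤ (⨆ t, ‖g t‖) * ‖k‖) ∧
      (LinearMap.ker (S : K →ₗ[ℝ] C(I, ℝ)))ᗮ = (Submodule.span ℝ (Set.range g)).topologicalClosure) := by
  let G : C(I, K) := ⟨g, continuous_of_continuous_inner hg⟩
  have hG : ‖G‖ = ⨆ t, ‖g t‖ := G.norm_eq_iSup_norm
  refine ⟨⟨‖G‖, G.norm_coe_le_norm⟩, fun k => (G.innerRightCLM ℝ k).continuous,
    G.innerRightCLM ℝ, fun _ _ => rfl, fun k => hG ▸ G.norm_innerRightCLM_apply_le k,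
    G.orthogonal_ker_innerRightCLM⟩

theorem stmt11 {I : Type*} [MetricSpace I] [CompactSpace I]
    {K : Type*} [NormedAddCommGroup K] [InnerProductSpace ℝ K] [CompleteSpace K]
    [TopologicalSpace.SeparableSpace K]
    (g : I → K) (hg : Continuous fun p : I × I => ⟪g p.1, g p.2⟫) :
    (∃ M : ℝ, ∀ t, ‖g t‖ ≤ M) ∧
    (∀ k : K, Continuous fun t => ⟪g t, k⟫) ∧
    (∃ S : K →L[ℝ] C(I, ℝ),
      (∀ (k : K) (t : I), S k t = ⟪g t, k⟫) ∧
      (∀ k : K, ‖S k‖ ≤ (⨆ t, ‖g t‖) * ‖k‖) ∧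
      (LinearMap.ker (S : K →ₗ[ℝ] C(I, ℝ)))ᗮ = (Submodule.span ℝ (Set.range g)).topologicalClosure) :=
  stmt11_general g hg
end

section
/- For all T > 0 and s, t ∈ [0, T], the series ∑_{j=1}^∞ (2T / (π²(j − 1/2)²)) · sin(π(j − 1/2)s/T) · sin(π(j − 1/2)t/T) converges with sum min(s, t). -/
open Filter Topology Real

/-!
By `2 sin a sin b = cos (a - b) - cos (a + b)` the series splits into two cosine series
`∑ cos ((j + 1/2) y) / (j + 1/2)²`. These are four times the odd-index part of the Fourier series
`∑ cos (n y / 2) / n² = π²/6 - π y/4 + y²/16` (a Bernoulli polynomial), so they equal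
`π²/2 - π y/2` for `y ∈ [0, 2π]`. At `y = π |s - t| / T` and `y = π (s + t) / T` the two values
differ by `π² (s + t - |s - t|) / (2T) = π² min s t / T`.
-/

-- The `n = 0` term is `cos 0 / 0 = 0`.
theorem hasSum_cos_nat_mul_div_sq {θ : ℝ} (hθ : θ ∈ Set.Icc 0 (2 * π)) :
    HasSum (fun n : ℕ => cos (n * θ) / (n : ℝ) ^ 2) (π ^ 2 / 6 - π * θ / 2 + θ ^ 2 / 4) := by
  have hx : θ / (2 * π) ∈ Set.Icc (0 : ℝ) 1 :=
    ⟨by have := hθ.1; positivity, (div_le_one (by positivity)).2 hθ.2⟩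
  have h := hasSum_one_div_nat_pow_mul_cos (k := 1) one_ne_zero hx
  rw [← bernoulliFun, bernoulliFun_two] at h
  convert h using 1
  · ext n
    rw [show 2 * π * n * (θ / (2 * π)) = n * θ by field_simp]
    ring
  · field_simp
    ring

theorem HasSum.odd_of_even {G : Type*} [AddCommGroup G] [UniformSpace G] [IsUniformAddGroup G]
    [CompleteSpace G] [T2Space G] {f : ℕ → G} {a b : G} (hf : HasSum f a)
    (he : HasSum (fun k => f (2 * k)) b) : HasSum (fun k => f (2 * k + 1)) (a - b) := by
  have ho : Summable fun k => f (2 * k + 1) :=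
    hf.summable.comp_injective fun _ _ h => by simpa using h
  rw [(he.even_add_odd ho.hasSum).unique hf |>.symm, add_sub_cancel_left]
  exact ho.hasSum

theorem hasSum_cos_add_half_mul_div_sq {y : ℝ} (hy : y ∈ Set.Icc 0 (2 * π)) :
    HasSum (fun j : ℕ => cos ((j + 1 / 2) * y) / ((j : ℝ) + 1 / 2) ^ 2)
      (π ^ 2 / 2 - π * y / 2) := by
  have hy2 : y / 2 ∈ Set.Icc 0 (2 * π) := ⟨by linarith [hy.1], by linarith [hy.2, pi_pos]⟩
  have he : HasSum (fun k : ℕ => cos (↑(2 * k) * (y / 2)) / (↑(2 * k) : ℝ) ^ 2)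
      ((π ^ 2 / 6 - π * y / 2 + y ^ 2 / 4) / 4) := by
    convert! (hasSum_cos_nat_mul_div_sq hy).div_const 4 using 1
    funext k
    push_cast
    rw [show 2 * (k : ℝ) * (y / 2) = k * y by ring]
    ring
  convert! ((hasSum_cos_nat_mul_div_sq hy2).odd_of_even he).mul_left 4 using 1
  · funext j
    push_cast
    rw [show (2 * (j : ℝ) + 1) * (y / 2) = (j + 1 / 2) * y by ring]
    field_simp
    ring
  · ring

theorem hasSum_sin_mul_sin_div_sq {x y : ℝ} (hx : x ∈ Set.Icc 0 π) (hy : y ∈ Set.Icc 0 π) :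
    HasSum (fun j : ℕ => sin ((j + 1 / 2) * x) * sin ((j + 1 / 2) * y) / ((j : ℝ) + 1 / 2) ^ 2)
      (π / 2 * min x y) := by
  have hsub : |x - y| ∈ Set.Icc 0 (2 * π) :=
    ⟨abs_nonneg _, abs_sub_le_iff.2 ⟨by linarith [hx.2, hy.1, pi_pos], by linarith [hx.1, hy.2, pi_pos]⟩⟩
  have hadd : x + y ∈ Set.Icc 0 (2 * π) :=
    ⟨by linarith [hx.1, hy.1], by linarith [hx.2, hy.2]⟩
  have hmin : (π ^ 2 / 2 - π * |x - y| / 2 - (π ^ 2 / 2 - π * (x + y) / 2)) / 2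
      = π / 2 * min x y := by
    rcases le_total x y with h | h
    · rw [min_eq_left h, abs_of_nonpos (by linarith)]; ring
    · rw [min_eq_right h, abs_of_nonneg (by linarith)]; ring
  rw [← hmin]
  convert! ((hasSum_cos_add_half_mul_div_sq hsub).sub
    (hasSum_cos_add_half_mul_div_sq hadd)).div_const 2 using 1
  funext j
  have hc : (0 : ℝ) ≤ j + 1 / 2 := by positivity
  rw [← abs_of_nonneg hc, ← abs_mul, cos_abs, abs_of_nonneg hc, ← sub_div, mul_sub, mul_add,
    ← two_mul_sin_mul_sin]
  ring

theorem HasSum.tendsto_sum_Icc_one {M : Type*} [AddCommMonoid M]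
    [TopologicalSpace M] {f : ℕ → M} {a : M} (h : HasSum (fun i => f (i + 1)) a) :
    Tendsto (fun n => ∑ j ∈ Finset.Icc 1 n, f j) atTop (𝓝 a) := by
  convert h.tendsto_sum_nat using 2 with n
  rw [← Finset.Ico_add_one_right_eq_Icc, Finset.sum_Ico_eq_sum_range]
  simp [add_comm]

theorem stmt14 (T : ℝ) (hT : 0 < T) (s t : ℝ) (hs : s ∈ Set.Icc 0 T) (ht : t ∈ Set.Icc 0 T) :
    Tendsto
      (fun n : ℕ => ∑ j ∈ Finset.Icc 1 n,
        (2 * T / (π ^ 2 * ((j : ℝ) - 1 / 2) ^ 2)) *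
          (Real.sin (π * ((j : ℝ) - 1 / 2) * s / T) *
            Real.sin (π * ((j : ℝ) - 1 / 2) * t / T)))
      atTop (𝓝 (min s t)) := by
  have scaled {r : ℝ} (hr : r ∈ Set.Icc 0 T) : π * r / T ∈ Set.Icc 0 π :=
    ⟨by have := hr.1; positivity, by rw [div_le_iff₀ hT]; nlinarith [hr.2, pi_pos]⟩
  have h := (hasSum_sin_mul_sin_div_sq (scaled hs) (scaled ht)).mul_left (2 * T / π ^ 2)
  rw [min_div_div_right hT.le, ← mul_min_of_nonneg _ _ pi_pos.le] at h
  apply HasSum.tendsto_sum_Icc_one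
  convert! h using 1
  · funext j
    push_cast
    rw [show (j : ℝ) + 1 - 1 / 2 = j + 1 / 2 by ring]
    field_simp
  · field_simp
end

section
/- Let α > 0, T > 0 and ρ ∈ (0, 1]. Define β_0(ρ) = (1/(2T)) ∫_{−T}^{T} e^{−α|t|^ρ} dt and β_j(ρ) = (1/T) ∫_{−T}^{T} e^{−α|t|^ρ} cos(π j t/T) dt for j ≥ 1. Then β_j(ρ) > 0 for every j ≥ 0. -/
/-!
By evenness and the substitution `t = (T / j) s`, `β_j` is a positive multiple of
`∫₀ʲ f(s) cos(πs) ds` with `f(s) = exp(-a s^ρ)`, `a = α (T / j)^ρ`; this `f` is strictly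
decreasing and, as `ρ ≤ 1`, strictly convex on `[0, ∞)`. Cutting `[0, j]` into unit intervals,
on which `cos(πs)` alternates sign, the integral becomes `∫₀¹ A(u) cos(πu) du` with
`A(u) = ∑ₖ (-1)ᵏ f(u + k)`. Folding `[0, 1]` at `1/2`, this is positive once `A(u) > A(1 - u)`
for `u < 1/2`. That difference is the alternating sum of `f(u + k) - f(1 - u + k)`, terms which
are nonnegative since `f` decreases and strictly decreasing in `k` since `f` is strictly convex.
-/

open Real Set intervalIntegral MeasureTheory

theorem alternating_sum_range_add_two (c : ℕ → ℝ) (n : ℕ) :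
    ∑ k ∈ Finset.range (n + 2), (-1) ^ k * c k =
      c 0 - c 1 + ∑ k ∈ Finset.range n, (-1) ^ k * c (k + 2) := by
  rw [Finset.sum_range_succ', Finset.sum_range_succ']
  simp only [pow_succ, mul_neg, mul_one, neg_neg, zero_add, pow_zero, neg_mul, one_mul]
  ring

theorem alternating_sum_nonneg {c : ℕ → ℝ} (hc : ∀ k, 0 ≤ c k) (hanti : Antitone c) (n : ℕ) :
    0 ≤ ∑ k ∈ Finset.range n, (-1) ^ k * c k := by
  induction n using Nat.twoStepInduction generalizing c with
  | zero => simp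
  | one => simpa using hc 0
  | more n ih _ =>
    rw [alternating_sum_range_add_two]
    have := ih (fun k => hc (k + 2)) fun k l hkl => hanti (by omega)
    linarith [hanti (Nat.zero_le 1)]

theorem alternating_sum_pos {c : ℕ → ℝ} (hc : ∀ k, 0 ≤ c k) (hanti : StrictAnti c) {n : ℕ}
    (hn : n ≠ 0) : 0 < ∑ k ∈ Finset.range n, (-1) ^ k * c k := by
  match n, hn with
  | 1, _ => simpa using (hc 1).trans_lt (hanti zero_lt_one)
  | n + 2, _ =>
    rw [alternating_sum_range_add_two]
    have := alternating_sum_nonneg (fun k => hc (k + 2))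
      (fun k l hkl => hanti.antitone (by omega)) n
    linarith [hanti zero_lt_one]

theorem StrictConvexOn.map_add_sub_map_lt {s : Set ℝ} {f : ℝ → ℝ} (hf : StrictConvexOn ℝ s f)
    {x y d : ℝ} (hx : x ∈ s) (hyd : y + d ∈ s) (hxy : x < y) (hd : 0 < d) :
    f (x + d) - f x < f (y + d) - f y := by
  have hxd : x + d ∈ s := hf.1.ordConnected.out hx hyd ⟨by linarith, by linarith⟩
  have hy : y ∈ s := hf.1.ordConnected.out hx hyd ⟨by linarith, by linarith⟩
  -- the secant slope over `[x, y + d]` lies strictly between the slopes over the two end pieces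
  have h₁ : (f (x + d) - f x) / d < (f (y + d) - f x) / (y + d - x) := by
    simpa using hf.secant_strict_mono hx hxd hyd (by linarith) (by linarith) (by linarith)
  have h₂ : (f (y + d) - f x) / (y + d - x) < (f (y + d) - f y) / d := by
    have := hf.secant_strict_mono hyd hx hy (by linarith) (by linarith) hxy
    rwa [← neg_div_neg_eq, neg_sub, neg_sub, ← neg_div_neg_eq (f y - _), neg_sub, neg_sub,
      add_sub_cancel_left] at this
  exact (div_lt_div_iff_of_pos_right hd).1 (h₁.trans h₂)

theorem integral_mul_cos_pi_pos_of_reflect_lt {g : ℝ → ℝ} (hg : IntervalIntegrable g volume 0 1)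
    (hlt : ∀ u ∈ Ioo (0 : ℝ) (1 / 2), g (1 - u) < g u) :
    0 < ∫ u in (0 : ℝ)..1, g u * cos (π * u) := by
  set F : ℝ → ℝ := fun u => g u * cos (π * u)
  have hF : IntervalIntegrable F volume 0 1 := hg.mul_continuousOn (by fun_prop)
  have hhalf : (1 / 2 : ℝ) ∈ uIcc 0 1 := by rw [uIcc_of_le zero_le_one]; norm_num
  have hF₁ : IntervalIntegrable F volume 0 (1 / 2) := hF.mono_set (uIcc_subset_uIcc_left hhalf)
  have hF₂ : IntervalIntegrable F volume (1 / 2) 1 := hF.mono_set (uIcc_subset_uIcc_right hhalf)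
  have hF₂' : IntervalIntegrable (fun u => F (1 - u)) volume 0 (1 / 2) := by
    convert (hF₂.comp_sub_left 1).symm using 1 <;> norm_num
  have hreflect : ∫ u in (1 / 2 : ℝ)..1, F u = ∫ u in (0 : ℝ)..(1 / 2), F (1 - u) := by
    rw [integral_comp_sub_left]; norm_num
  rw [← integral_add_adjacent_intervals hF₁ hF₂, hreflect, ← integral_add hF₁ hF₂']
  refine intervalIntegral_pos_of_pos_on (hF₁.add hF₂') (fun u hu => ?_) (by norm_num)
  have hcos : 0 < cos (π * u) :=
    cos_pos_of_mem_Ioo ⟨by nlinarith [pi_pos, hu.1], by nlinarith [pi_pos, hu.2]⟩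
  have hfold : F u + F (1 - u) = (g u - g (1 - u)) * cos (π * u) := by
    simp only [F, mul_sub, mul_one, cos_pi_sub]; ring
  rw [hfold]
  exact mul_pos (sub_pos.2 (hlt u hu)) hcos

theorem integral_zero_natCast_eq_integral_sum_add_natCast {E : Type*} [NormedAddCommGroup E]
    [NormedSpace ℝ E] {g : ℝ → E} {n : ℕ} (hg : IntervalIntegrable g volume 0 n) :
    ∫ s in (0 : ℝ)..n, g s = ∫ u in (0 : ℝ)..1, ∑ k ∈ Finset.range n, g (u + k) := by
  have hpiece : ∀ k < n, IntervalIntegrable g volume k (k + 1 : ℕ) := fun k hk => by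
    refine hg.mono_set ?_
    rw [uIcc_of_le (by exact_mod_cast k.le_succ), uIcc_of_le n.cast_nonneg]
    exact Icc_subset_Icc k.cast_nonneg (by exact_mod_cast hk)
  have hsum := sum_integral_adjacent_intervals hpiece
  rw [Nat.cast_zero] at hsum
  rw [intervalIntegral.integral_finsetSum, ← hsum]
  · refine Finset.sum_congr rfl fun k _ => ?_
    rw [integral_comp_add_right, zero_add, Nat.cast_succ, add_comm]
  · intro k hk
    simpa using (hpiece k (Finset.mem_range.1 hk)).comp_add_right k

theorem integral_mul_cos_pi_eq_integral_alternating_sum {f : ℝ → ℝ} {n : ℕ}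
    (hf : IntervalIntegrable f volume 0 n) :
    ∫ s in (0 : ℝ)..n, f s * cos (π * s) =
      ∫ u in (0 : ℝ)..1, (∑ k ∈ Finset.range n, (-1) ^ k * f (u + k)) * cos (π * u) := by
  rw [integral_zero_natCast_eq_integral_sum_add_natCast (hf.mul_continuousOn (by fun_prop))]
  refine integral_congr fun u _ => ?_
  simp only [Finset.sum_mul]
  exact Finset.sum_congr rfl fun k _ => by rw [mul_add, mul_comm π k, cos_add_nat_mul_pi]; ring

theorem integral_mul_cos_pi_pos_of_strictAntiOn_of_strictConvexOn {f : ℝ → ℝ}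
    (hanti : StrictAntiOn f (Ici 0)) (hconv : StrictConvexOn ℝ (Ici 0) f) {n : ℕ} (hn : n ≠ 0) :
    0 < ∫ s in (0 : ℝ)..n, f s * cos (π * s) := by
  have hint : ∀ a b : ℝ, 0 ≤ a → 0 ≤ b → IntervalIntegrable f volume a b := fun a b ha hb =>
    (hanti.antitoneOn.mono fun x hx => le_trans (le_min ha hb) hx.1).intervalIntegrable
  rw [integral_mul_cos_pi_eq_integral_alternating_sum (hint 0 n le_rfl n.cast_nonneg)]
  refine integral_mul_cos_pi_pos_of_reflect_lt ?_ fun u ⟨hu₀, hu₁⟩ => ?_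
  · have hterm : ∀ k ∈ Finset.range n,
        IntervalIntegrable (fun u => (-1) ^ k * f (u + k)) volume 0 1 := fun k _ => by
      simpa using ((hint k (1 + k) k.cast_nonneg (by positivity)).comp_add_right k).const_mul _
    simpa only [Finset.sum_fn] using IntervalIntegrable.sum _ hterm
  · have hnonneg : ∀ k : ℕ, 0 ≤ f (u + k) - f (1 - u + k) := fun k => by
      have hk : (0 : ℝ) ≤ k := k.cast_nonneg
      exact sub_nonneg.2 <|
        hanti.antitoneOn (mem_Ici.2 (by linarith)) (mem_Ici.2 (by linarith)) (by linarith)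
    have hdecr : StrictAnti fun k : ℕ => f (u + k) - f (1 - u + k) :=
      strictAnti_nat_of_succ_lt fun k => by
        have hk : (0 : ℝ) ≤ k := k.cast_nonneg
        have := hconv.map_add_sub_map_lt (x := u + k) (y := 1 - u + k) (d := 1)
          (mem_Ici.2 (by linarith)) (mem_Ici.2 (by linarith)) (by linarith) one_pos
        simp only [Nat.cast_succ, ← add_assoc]
        linarith
    have hpos := alternating_sum_pos hnonneg hdecr hn
    simp only [mul_sub, Finset.sum_sub_distrib] at hpos
    linarith

theorem strictAntiOn_neg_mul_rpow {a ρ : ℝ} (ha : 0 < a) (hρ : 0 < ρ) :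
    StrictAntiOn (fun t : ℝ => -a * t ^ ρ) (Ici 0) := fun _ hx _ _ hxy =>
  mul_lt_mul_of_neg_left (rpow_lt_rpow hx hxy hρ) (neg_lt_zero.2 ha)

theorem strictAntiOn_exp_neg_mul_rpow {a ρ : ℝ} (ha : 0 < a) (hρ : 0 < ρ) :
    StrictAntiOn (fun t : ℝ => exp (-a * t ^ ρ)) (Ici 0) :=
  exp_strictMono.comp_strictAntiOn (strictAntiOn_neg_mul_rpow ha hρ)

theorem strictConvexOn_exp_neg_mul_rpow {a ρ : ℝ} (ha : 0 < a) (hρ₀ : 0 < ρ) (hρ₁ : ρ ≤ 1) :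
    StrictConvexOn ℝ (Ici 0) (fun t : ℝ => exp (-a * t ^ ρ)) := by
  have hinner : ConvexOn ℝ (Ici 0) (fun t : ℝ => -a * t ^ ρ) := by
    simpa [smul_eq_mul] using (concaveOn_rpow hρ₀.le hρ₁).neg.smul ha.le
  have hcont : ContinuousOn (fun t : ℝ => -a * t ^ ρ) (Ici 0) :=
    (continuous_const.mul (continuous_rpow_const hρ₀.le)).continuousOn
  have hexp := strictConvexOn_exp.subset (subset_univ _) (isPreconnected_Ici.image _ hcont).convex
  exact hexp.comp_convexOn hinner (exp_strictMono.monotone.monotoneOn _)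
    (strictAntiOn_neg_mul_rpow ha hρ₀).injOn

theorem integral_neg_eq_two_smul_integral_of_even {E : Type*} [NormedAddCommGroup E]
    [NormedSpace ℝ E] {f : ℝ → E} (heven : ∀ t, f (-t) = f t) {a : ℝ}
    (hf : IntervalIntegrable f volume (-a) a) :
    ∫ t in (-a)..a, f t = 2 • ∫ t in (0 : ℝ)..a, f t := by
  have h0 : (0 : ℝ) ∈ uIcc (-a) a := by simp [mem_uIcc, le_total]
  rw [← integral_add_adjacent_intervals (hf.mono_set (uIcc_subset_uIcc_left h0))
    (hf.mono_set (uIcc_subset_uIcc_right h0)), two_smul]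
  congr 1
  simpa [heven] using integral_comp_neg (a := -a) (b := 0) f

theorem integral_exp_neg_mul_rpow_mul_cos_pos {a ρ T : ℝ} (ha : 0 < a) (hρ₀ : 0 < ρ)
    (hρ₁ : ρ ≤ 1) (hT : 0 < T) {j : ℕ} (hj : j ≠ 0) :
    0 < ∫ t in (0 : ℝ)..T, exp (-a * t ^ ρ) * cos (π * j * t / T) := by
  set m := T / j with hm_def
  have hm : 0 < m := by positivity
  have hmj : m * j = T := by rw [hm_def]; field_simp
  have hsubst : ∫ t in (0 : ℝ)..T, exp (-a * t ^ ρ) * cos (π * j * t / T) =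
      m * ∫ s in (0 : ℝ)..j, exp (-(a * m ^ ρ) * s ^ ρ) * cos (π * s) := by
    calc ∫ t in (0 : ℝ)..T, exp (-a * t ^ ρ) * cos (π * j * t / T)
        = ∫ t in m * 0..m * j, exp (-a * t ^ ρ) * cos (π * j * t / T) := by rw [mul_zero, hmj]
      _ = m • ∫ s in (0 : ℝ)..j, exp (-a * (m * s) ^ ρ) * cos (π * j * (m * s) / T) :=
        (smul_integral_comp_mul_left _ m).symm
      _ = m * ∫ s in (0 : ℝ)..j, exp (-(a * m ^ ρ) * s ^ ρ) * cos (π * s) := by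
        rw [smul_eq_mul]
        congr 1
        refine integral_congr fun s hs => ?_
        have hs0 : 0 ≤ s := by rw [uIcc_of_le j.cast_nonneg] at hs; exact hs.1
        have harg : π * j * (m * s) / T = π * s := by rw [← hmj]; field_simp
        rw [mul_rpow hm.le hs0, harg, neg_mul, neg_mul, mul_assoc]
  rw [hsubst]
  exact mul_pos hm (integral_mul_cos_pi_pos_of_strictAntiOn_of_strictConvexOn
    (strictAntiOn_exp_neg_mul_rpow (by positivity) hρ₀)
    (strictConvexOn_exp_neg_mul_rpow (by positivity) hρ₀ hρ₁) hj)

theorem stmt16 (α T ρ : ℝ) (hα : 0 < α) (hT : 0 < T) (hρ0 : 0 < ρ) (hρ1 : ρ ≤ 1) :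
    0 < (1 / (2 * T)) * ∫ t in (-T)..T, Real.exp (-α * |t| ^ ρ) ∧
    ∀ j : ℕ, 1 ≤ j →
      0 < (1 / T) * ∫ t in (-T)..T,
        Real.exp (-α * |t| ^ ρ) * Real.cos (π * j * t / T) := by
  have hγ : Continuous fun t : ℝ => exp (-α * |t| ^ ρ) :=
    continuous_exp.comp (continuous_const.mul ((continuous_rpow_const hρ0.le).comp continuous_abs))
  refine ⟨mul_pos (by positivity) (intervalIntegral_pos_of_pos (hγ.intervalIntegrable _ _)
    (fun _ => exp_pos _) (by linarith)), fun j hj => ?_⟩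
  set G : ℝ → ℝ := fun t => exp (-α * |t| ^ ρ) * cos (π * j * t / T)
  have heven : ∀ t, G (-t) = G t := fun t => by
    simp only [G, abs_neg, mul_neg, neg_div, cos_neg]
  have hhalf : ∫ t in (0 : ℝ)..T, G t = ∫ t in (0 : ℝ)..T, exp (-α * t ^ ρ) * cos (π * j * t / T) :=
    integral_congr fun t ht => by
      rw [uIcc_of_le hT.le] at ht
      simp only [G, abs_of_nonneg ht.1]
  rw [integral_neg_eq_two_smul_integral_of_even heven
    ((hγ.mul (by fun_prop)).intervalIntegrable _ _), hhalf, nsmul_eq_mul]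
  have := integral_exp_neg_mul_rpow_mul_cos_pos hα hρ0 hρ1 hT (by omega : j ≠ 0)
  positivity
end
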